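/- arXiv:2601.04850 — 3 statements merged into one kernel-verified Lean document; each statement's English description precedes it below -/
import Mathlib

section
/- Let m ≥ 1, l ∈ ℕ, n ≥ 1, ν ∈ (0,1), and suppose 0 < p_k < 1 for all l ≤ k ≤ l+n−1. Then ∑_{k=l}^{l+n−1} ∫_k^{k+1} (t·ν^t)^m · P_k · p_k^{t−k} · log(1/p_k) dt = ∑_{k=l}^{l+n−1} P_k · log(1/p_k) · (Γ(m+1, k·log(1/(ν^m·p_k))) − Γ(m+1, (k+1)·log(1/(ν^m·p_k)))) / (p_k^k · (log(1/(ν^m·p_k)))^{m+1}). (This is the m-th moment of T_x·ν^{T_x} restricted to {l ≤ T_x < l+n} under the constant force of mortality assumption.) -/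
/-!
Under the constant force assumption, `ν ^ (m t) * p ^ t = exp (-c t)` with
`c = log (1 / (ν ^ m * p)) > 0`, so each yearly term is, up to the constant `P L / p ^ k`,
the integral of `t ^ m * exp (-c t)` over `[k, k + 1]`; the substitution `u = c t` turns it into
`c ^ (-(m + 1))` times the incomplete gamma difference `Γ(m + 1, k c) - Γ(m + 1, (k + 1) c)`.
-/

open Real Finset MeasureTheory

noncomputable def upperGamma (a x : ℝ) : ℝ :=
  ∫ t in Set.Ioi x, t ^ (a - 1) * Real.exp (-t)

lemma integrableOn_rpow_mul_exp_neg_Ioi {s x : ℝ} (hs : 0 < s) (hx : 0 ≤ x) :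
    IntegrableOn (fun t => t ^ (s - 1) * exp (-t)) (Set.Ioi x) :=
  ((GammaIntegral_convergent hs).mono_set (Set.Ioi_subset_Ioi hx)).congr_fun
    (fun _ _ => mul_comm _ _) measurableSet_Ioi

lemma upperGamma_sub_upperGamma {s a b : ℝ} (hs : 0 < s) (ha : 0 ≤ a) (hb : 0 ≤ b) :
    upperGamma s a - upperGamma s b = ∫ t in a..b, t ^ (s - 1) * exp (-t) :=
  intervalIntegral.integral_Ioi_sub_Ioi' (integrableOn_rpow_mul_exp_neg_Ioi hs ha)
    (integrableOn_rpow_mul_exp_neg_Ioi hs hb)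

lemma integral_rpow_mul_exp_neg_mul {s c a b : ℝ} (hs : 0 < s) (hc : 0 < c) (ha : 0 ≤ a)
    (hb : 0 ≤ b) :
    ∫ t in a..b, t ^ (s - 1) * exp (-(c * t)) =
      (upperGamma s (a * c) - upperGamma s (b * c)) / c ^ s := by
  have hscale : ∀ t ∈ Set.uIcc a b,
      t ^ (s - 1) * exp (-(c * t)) = c ^ (1 - s) * ((c * t) ^ (s - 1) * exp (-(c * t))) := by
    intro t ht
    have ht0 : 0 ≤ t := (le_min ha hb).trans ht.1
    rw [mul_rpow hc.le ht0, ← mul_assoc, ← mul_assoc, ← rpow_add hc, sub_add_sub_cancel,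
      sub_self, rpow_zero, one_mul]
  rw [intervalIntegral.integral_congr hscale, intervalIntegral.integral_const_mul,
    intervalIntegral.integral_comp_mul_left (fun u => u ^ (s - 1) * exp (-u)) hc.ne',
    ← upperGamma_sub_upperGamma hs (by positivity) (by positivity), smul_eq_mul,
    mul_comm a c, mul_comm b c, rpow_sub hc, rpow_one]
  field_simp

lemma mul_rpow_pow_mul_rpow_sub_eq {ν q : ℝ} (hν : 0 < ν) (hq : 0 < q) (m : ℕ) (s t : ℝ) :
    (t * ν ^ t) ^ m * q ^ (t - s) =
      t ^ m * exp (-(log (1 / (ν ^ (m : ℝ) * q)) * t)) / q ^ s := by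
  have hexp : exp (-(log (1 / (ν ^ (m : ℝ) * q)) * t)) = (ν ^ t) ^ m * q ^ t := by
    rw [one_div, log_inv, neg_mul, neg_neg, ← rpow_def_of_pos (by positivity),
      mul_rpow (by positivity) hq.le, ← rpow_mul hν.le, mul_comm (m : ℝ), rpow_mul hν.le,
      rpow_natCast]
  rw [hexp, rpow_sub hq]
  ring

lemma integral_mul_rpow_pow_mul_rpow_sub {ν q : ℝ} (hν : 0 < ν) (hq : 0 < q) {m : ℕ}
    (hνq : ν ^ (m : ℝ) * q < 1) {a b : ℝ} (ha : 0 ≤ a) (hb : 0 ≤ b) (s : ℝ) :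
    ∫ t in a..b, (t * ν ^ t) ^ m * q ^ (t - s) =
      (upperGamma ((m : ℝ) + 1) (a * log (1 / (ν ^ (m : ℝ) * q))) -
          upperGamma ((m : ℝ) + 1) (b * log (1 / (ν ^ (m : ℝ) * q)))) /
        (q ^ s * log (1 / (ν ^ (m : ℝ) * q)) ^ (m + 1)) := by
  have hc : 0 < log (1 / (ν ^ (m : ℝ) * q)) := log_pos (one_lt_one_div (by positivity) hνq)
  have hpow : ∀ t : ℝ, t ^ m = t ^ ((m : ℝ) + 1 - 1) := fun t => by simp
  simp_rw [mul_rpow_pow_mul_rpow_sub_eq hν hq m s, hpow]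
  rw [intervalIntegral.integral_div, integral_rpow_mul_exp_neg_mul (by positivity) hc ha hb,
    div_div, mul_comm (q ^ s), ← rpow_natCast]
  norm_cast

theorem moment_continuously_increasing_insurance_general
    (p : ℕ → ℝ) (ν : ℝ) (hν : ν ∈ Set.Ioo (0 : ℝ) 1)
    (m l n : ℕ)
    (hp : ∀ k, l ≤ k → k < l + n → 0 < p k ∧ p k < 1) :
    ∑ k ∈ Finset.Ico l (l + n),
      ∫ t in (k : ℝ)..((k : ℝ) + 1),
        (t * ν ^ t) ^ m *
          ((∏ i ∈ Finset.range k, p i) * p k ^ (t - (k : ℝ)) * Real.log (1 / p k))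
    = ∑ k ∈ Finset.Ico l (l + n),
        (∏ i ∈ Finset.range k, p i) * Real.log (1 / p k) *
          (upperGamma ((m : ℝ) + 1) ((k : ℝ) * Real.log (1 / (ν ^ (m : ℝ) * p k))) -
            upperGamma ((m : ℝ) + 1)
              (((k : ℝ) + 1) * Real.log (1 / (ν ^ (m : ℝ) * p k)))) /
          (p k ^ k * Real.log (1 / (ν ^ (m : ℝ) * p k)) ^ (m + 1)) := by
  refine Finset.sum_congr rfl fun k hk => ?_
  obtain ⟨hk0, hk1⟩ := hp k (Finset.mem_Ico.1 hk).1 (Finset.mem_Ico.1 hk).2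
  have hνp : ν ^ (m : ℝ) * p k < 1 :=
    mul_lt_one_of_nonneg_of_lt_one_right (rpow_le_one hν.1.le hν.2.le m.cast_nonneg) hk0.le hk1
  rw [intervalIntegral.integral_congr (g := fun t => (∏ i ∈ Finset.range k, p i) *
      log (1 / p k) * ((t * ν ^ t) ^ m * p k ^ (t - (k : ℝ)))) (fun t _ => by ring),
    intervalIntegral.integral_const_mul,
    integral_mul_rpow_pow_mul_rpow_sub hν.1 hk0 hνp (by positivity) (by positivity),
    rpow_natCast (p k) k, mul_div_assoc]

/-- m-th moment of T_x·ν^{T_x} restricted to {l ≤ T_x < l+n}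
under the constant force of mortality assumption. -/
theorem moment_continuously_increasing_insurance
    (p : ℕ → ℝ) (ν : ℝ) (hν : ν ∈ Set.Ioo (0 : ℝ) 1)
    (m l n : ℕ) (hm : 1 ≤ m) (hn : 1 ≤ n)
    (hp : ∀ k, l ≤ k → k < l + n → 0 < p k ∧ p k < 1) :
    ∑ k ∈ Finset.Ico l (l + n),
      ∫ t in (k : ℝ)..((k : ℝ) + 1),
        (t * ν ^ t) ^ m *
          ((∏ i ∈ Finset.range k, p i) * p k ^ (t - (k : ℝ)) * Real.log (1 / p k))
    = ∑ k ∈ Finset.Ico l (l + n),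
        (∏ i ∈ Finset.range k, p i) * Real.log (1 / p k) *
          (upperGamma ((m : ℝ) + 1) ((k : ℝ) * Real.log (1 / (ν ^ (m : ℝ) * p k))) -
            upperGamma ((m : ℝ) + 1)
              (((k : ℝ) + 1) * Real.log (1 / (ν ^ (m : ℝ) * p k)))) /
          (p k ^ k * Real.log (1 / (ν ^ (m : ℝ) * p k)) ^ (m + 1)) :=
  moment_continuously_increasing_insurance_general p ν hν m l n hp
end

section
/- Let l ∈ ℕ, n ≥ 1, ν ∈ (0,1), and suppose 0 < p_k < 1 for all l ≤ k ≤ l+n−1. Then ∑_{k=l}^{l+n−1} ∫_k^{k+1} (t·ν^t)² · P_k · p_k^{t−k} · log(1/p_k) dt = ∑_{k=l}^{l+n−1} P_k · log(1/p_k) · ν^{2k} · (−2 + 2·p_k·ν² + log(ν²·p_k)·(2k − 2·p_k·(1+k)·ν² + (−k² + p_k·(1+k)²·ν²)·log(ν²·p_k))) / (log(ν²·p_k))³. -/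
open Real Finset

/-
Under constant force of mortality the density on `[k, k+1)` is a multiple of `p_k ^ (t - k)`,
and `(ν ^ t) ^ 2 = ν ^ (2k) (ν ^ 2) ^ (t - k)`, so each summand is a constant times
`∫ t in k..k+1, t ^ 2 q ^ (t - k)` with `q = ν ^ 2 p_k < 1`; integrating by an explicit
antiderivative (which needs `log q ≠ 0`) gives the closed form.
-/

lemma hasDerivAt_rpow_sub_mul_sq_antideriv {q : ℝ} (hq : 0 < q) (hq1 : q ≠ 1) (c t : ℝ) :
    HasDerivAt
      (fun t => q ^ (t - c) * (t ^ 2 / log q - 2 * t / log q ^ 2 + 2 / log q ^ 3))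
      (t ^ 2 * q ^ (t - c)) t := by
  have ha : log q ≠ 0 := log_ne_zero_of_pos_of_ne_one hq hq1
  have hexp : HasDerivAt (fun t => q ^ (t - c)) (q ^ (t - c) * log q) t :=
    ((hasStrictDerivAt_const_rpow hq (t - c)).hasDerivAt).comp_sub_const t c
  have hpoly : HasDerivAt (fun t : ℝ => t ^ 2 / log q - 2 * t / log q ^ 2 + 2 / log q ^ 3)
      (2 * t / log q - 2 / log q ^ 2) t := by
    simpa [mul_comm] using (((hasDerivAt_pow 2 t).div_const (log q)).sub
      (((hasDerivAt_id t).const_mul 2).div_const (log q ^ 2))).add_const (2 / log q ^ 3)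
  refine (hexp.mul hpoly).congr_deriv ?_
  field_simp
  ring

lemma integral_sq_mul_rpow_sub {q : ℝ} (hq : 0 < q) (hq1 : q ≠ 1) (c : ℝ) :
    ∫ t in c..c + 1, t ^ 2 * q ^ (t - c)
      = (-2 + 2 * q + log q * (2 * c - 2 * q * (1 + c) + (-c ^ 2 + q * (1 + c) ^ 2) * log q))
          / log q ^ 3 := by
  have ha : log q ≠ 0 := log_ne_zero_of_pos_of_ne_one hq hq1
  rw [intervalIntegral.integral_eq_sub_of_hasDerivAt
    (fun t _ => hasDerivAt_rpow_sub_mul_sq_antideriv hq hq1 c t)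
    ((by fun_prop (disch := exact hq.ne') : Continuous _).intervalIntegrable _ _)]
  simp only [add_sub_cancel_left, sub_self, rpow_one, rpow_zero]
  field_simp
  ring

lemma rpow_sq_eq_rpow_mul_sq_rpow_sub {ν : ℝ} (hν : 0 < ν) (s t : ℝ) :
    (ν ^ t) ^ 2 = ν ^ (2 * s) * (ν ^ 2) ^ (t - s) := by
  rw [← rpow_natCast_mul hν.le, ← rpow_add hν, ← rpow_mul_natCast hν.le]
  push_cast
  ring_nf

theorem second_moment_continuously_increasing_insurance_general
    (p : ℕ → ℝ) (ν : ℝ) (hν : ν ∈ Set.Ioo (0 : ℝ) 1)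
    (l n : ℕ)
    (hp : ∀ k, l ≤ k → k < l + n → 0 < p k ∧ p k < 1) :
    ∑ k ∈ Finset.Ico l (l + n),
      ∫ t in (k : ℝ)..((k : ℝ) + 1),
        (t * ν ^ t) ^ 2 *
          ((∏ i ∈ Finset.range k, p i) * p k ^ (t - (k : ℝ)) * Real.log (1 / p k))
    = ∑ k ∈ Finset.Ico l (l + n),
        (∏ i ∈ Finset.range k, p i) * Real.log (1 / p k) * ν ^ (2 * (k : ℝ)) *
          (-2 + 2 * p k * ν ^ 2 +
            Real.log (ν ^ 2 * p k) *
              (2 * (k : ℝ) - 2 * p k * (1 + (k : ℝ)) * ν ^ 2 +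
                (-(k : ℝ) ^ 2 + p k * (1 + (k : ℝ)) ^ 2 * ν ^ 2) *
                  Real.log (ν ^ 2 * p k))) /
          Real.log (ν ^ 2 * p k) ^ 3 := by
  obtain ⟨hν0, hν1⟩ := hν
  refine Finset.sum_congr rfl fun k hk => ?_
  obtain ⟨hk_ge, hk_lt⟩ := Finset.mem_Ico.mp hk
  obtain ⟨hp0, hp1⟩ := hp k hk_ge hk_lt
  have hq0 : 0 < ν ^ 2 * p k := by positivity
  have hq1 : ν ^ 2 * p k < 1 := mul_lt_one_of_nonneg_of_lt_one_left (by positivity)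
    (pow_lt_one₀ hν0.le hν1 two_ne_zero) hp1.le
  have hintegrand : ∀ t : ℝ, (t * ν ^ t) ^ 2 *
      ((∏ i ∈ Finset.range k, p i) * p k ^ (t - (k : ℝ)) * log (1 / p k))
      = (∏ i ∈ Finset.range k, p i) * log (1 / p k) * ν ^ (2 * (k : ℝ)) *
          (t ^ 2 * (ν ^ 2 * p k) ^ (t - k)) := fun t => by
    rw [mul_rpow (by positivity) hp0.le, mul_pow, rpow_sq_eq_rpow_mul_sq_rpow_sub hν0 k]
    ring
  simp only [hintegrand, intervalIntegral.integral_const_mul,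
    integral_sq_mul_rpow_sub hq0 hq1.ne]
  ring

/-- second moment of T_x·ν^{T_x} restricted to {l ≤ T_x < l+n}
under the constant force of mortality assumption. -/
theorem second_moment_continuously_increasing_insurance
    (p : ℕ → ℝ) (ν : ℝ) (hν : ν ∈ Set.Ioo (0 : ℝ) 1)
    (l n : ℕ) (hn : 1 ≤ n)
    (hp : ∀ k, l ≤ k → k < l + n → 0 < p k ∧ p k < 1) :
    ∑ k ∈ Finset.Ico l (l + n),
      ∫ t in (k : ℝ)..((k : ℝ) + 1),
        (t * ν ^ t) ^ 2 *
          ((∏ i ∈ Finset.range k, p i) * p k ^ (t - (k : ℝ)) * Real.log (1 / p k))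
    = ∑ k ∈ Finset.Ico l (l + n),
        (∏ i ∈ Finset.range k, p i) * Real.log (1 / p k) * ν ^ (2 * (k : ℝ)) *
          (-2 + 2 * p k * ν ^ 2 +
            Real.log (ν ^ 2 * p k) *
              (2 * (k : ℝ) - 2 * p k * (1 + (k : ℝ)) * ν ^ 2 +
                (-(k : ℝ) ^ 2 + p k * (1 + (k : ℝ)) ^ 2 * ν ^ 2) *
                  Real.log (ν ^ 2 * p k))) /
          Real.log (ν ^ 2 * p k) ^ 3 :=
  second_moment_continuously_increasing_insurance_general p ν hν l n hp
end

section
/- Let j ≥ 1, n ≥ 1, m ∈ ℕ, l ∈ ℕ, n₁ ∈ {0, 1, …, j−1}, ν ∈ (0,1), and suppose 0 < p_k < 1 for all l ≤ k ≤ l+n. Then ∑_{k=l}^{n+l−1} ∑_{d=n₁}^{j−1} (d + j·k + 1)^m · ∫_{k+d/j}^{k+(d+1)/j} ν^{m·t} · P_k · p_k^{t−k} · log(1/p_k) dt + ∑_{d=0}^{n₁−1} (d + j·(n+l) + 1)^m · ∫_{n+l+d/j}^{n+l+(d+1)/j} ν^{m·t} · P_{n+l} · p_{n+l}^{t−(n+l)}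 · log(1/p_{n+l}) dt = ∑_{k=l}^{n+l−1} (P_k · ν^{m·k} · log(p_k) / log(ν^m·p_k)) · (1 − ν^{m/j}·p_k^{1/j}) · ∑_{d=n₁}^{j−1} (d + j·k + 1)^m · ν^{d·m/j} · p_k^{d/j} + (ν^{(n+l)m} · P_{n+l} · log(p_{n+l}) · (1 − p_{n+l}^{1/j}·ν^{m/j}) / log(ν^m·p_{n+l})) · ∑_{d=0}^{n₁−1} (d + j·(n+l) + 1)^m · ν^{d·m/j} · p_{n+l}^{d/j}. (This is the m-th moment of (⌊j·T_x⌋+1)·ν^{T_x} restricted to {l + n₁/j ≤ T_x < n + l + n₁/j} under the constant force of mortality assumption.) -/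
open Real Finset

/-!
Under the constant force of mortality (cfm) assumption the discounted density
`ν ^ (m t) · P_k · p_k ^ (t - k) · log (1 / p_k)` is a constant multiple of `q ^ t` with
`q = ν ^ m · p_k`, so its integral over `[k + d/j, k + (d+1)/j]` is elementary and equals
`P_k ν ^ (m k) log p_k / log q · (1 - q ^ (1/j)) · q ^ (d/j)`; here `q < 1` keeps `log q ≠ 0`.
The identity then holds term by term.
-/

theorem integral_const_rpow {q : ℝ} (hq0 : 0 < q) (hq1 : q ≠ 1) (a b : ℝ) :
    ∫ t in a..b, q ^ t = (q ^ b - q ^ a) / log q := by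
  have hlog : log q ≠ 0 := log_ne_zero_of_pos_of_ne_one hq0 hq1
  simp only [rpow_def_of_pos hq0]
  rw [intervalIntegral.integral_comp_mul_left (fun x => exp x) hlog, integral_exp, smul_eq_mul]
  field_simp

theorem rpow_mul_cfm_density_eq {ν p : ℝ} (hν : 0 < ν) (hp : 0 < p) (r P K t : ℝ) :
    ν ^ (r * t) * (P * p ^ (t - K) * log (1 / p))
      = P * log (1 / p) * p ^ (-K) * (ν ^ r * p) ^ t := by
  rw [mul_rpow (rpow_nonneg hν.le r) hp.le, ← rpow_mul hν.le, rpow_sub hp, rpow_neg hp.le]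
  ring

theorem integral_rpow_mul_cfm_density {ν p r : ℝ} (hν : 0 < ν) (hp : 0 < p)
    (hq : ν ^ r * p ≠ 1) (P K a b : ℝ) :
    ∫ t in a..b, ν ^ (r * t) * (P * p ^ (t - K) * log (1 / p))
      = P * log (1 / p) * p ^ (-K) * ((ν ^ r * p) ^ b - (ν ^ r * p) ^ a) / log (ν ^ r * p) := by
  simp only [rpow_mul_cfm_density_eq hν hp]
  rw [intervalIntegral.integral_const_mul, integral_const_rpow (by positivity) hq, mul_div_assoc]

theorem rpow_mul_lt_one {ν p r : ℝ} (hν0 : 0 ≤ ν) (hν1 : ν ≤ 1) (hr : 0 ≤ r) (hp0 : 0 ≤ p)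
    (hp1 : p < 1) : ν ^ r * p < 1 :=
  mul_lt_one_of_nonneg_of_lt_one_right (rpow_le_one hν0 hν1 hr) hp0 hp1

theorem integral_rpow_mul_cfm_density_add_div {ν p r : ℝ} (hν : 0 < ν) (hp : 0 < p)
    (hq : ν ^ r * p ≠ 1) (P K D J : ℝ) :
    ∫ t in (K + D / J)..(K + (D + 1) / J), ν ^ (r * t) * (P * p ^ (t - K) * log (1 / p))
      = P * ν ^ (r * K) * log p / log (ν ^ r * p) *
          (1 - ν ^ (r / J) * p ^ (1 / J)) * (ν ^ (D * r / J) * p ^ (D / J)) := by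
  rw [integral_rpow_mul_cfm_density hν hp hq]
  set q := ν ^ r * p
  have hq0 : 0 < q := by positivity
  have hpow : ∀ s : ℝ, ν ^ (r * s) * p ^ s = q ^ s := fun s => by
    rw [mul_rpow (by positivity) hp.le, ← rpow_mul hν.le]
  have hstep : ν ^ (r / J) * p ^ (1 / J) = q ^ (1 / J) := by rw [← hpow, mul_one_div]
  have hoffset : ν ^ (D * r / J) * p ^ (D / J) = q ^ (D / J) := by
    rw [← hpow, mul_div_assoc', mul_comm D]
  have hstart : p ^ (-K) * q ^ K = ν ^ (r * K) := by
    rw [← hpow, mul_left_comm, ← rpow_add hp, neg_add_cancel, rpow_zero, mul_one]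
  rw [hstep, hoffset, ← hstart, one_div, log_inv,
    show K + (D + 1) / J = K + D / J + 1 / J by ring, rpow_add hq0, rpow_add hq0 K]
  ring

theorem moment_mthly_increasing_insurance_general
    (p : ℕ → ℝ) (ν : ℝ) (hν : ν ∈ Set.Ioo (0 : ℝ) 1)
    (j n m l n₁ : ℕ)
    (hp : ∀ k, l ≤ k → k ≤ l + n → 0 < p k ∧ p k < 1) :
    (∑ k ∈ Finset.Ico l (n + l), ∑ d ∈ Finset.Ico n₁ j,
        ((d : ℝ) + (j : ℝ) * (k : ℝ) + 1) ^ m *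
          ∫ t in ((k : ℝ) + (d : ℝ) / (j : ℝ))..((k : ℝ) + ((d : ℝ) + 1) / (j : ℝ)),
            ν ^ ((m : ℝ) * t) *
              ((∏ i ∈ Finset.range k, p i) * p k ^ (t - (k : ℝ)) * Real.log (1 / p k)))
      + ∑ d ∈ Finset.range n₁,
          ((d : ℝ) + (j : ℝ) * ((n : ℝ) + (l : ℝ)) + 1) ^ m *
            ∫ t in (((n : ℝ) + (l : ℝ)) + (d : ℝ) / (j : ℝ))..
                (((n : ℝ) + (l : ℝ)) + ((d : ℝ) + 1) / (j : ℝ)),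
              ν ^ ((m : ℝ) * t) *
                ((∏ i ∈ Finset.range (n + l), p i) *
                  p (n + l) ^ (t - ((n : ℝ) + (l : ℝ))) * Real.log (1 / p (n + l)))
    = (∑ k ∈ Finset.Ico l (n + l),
        (∏ i ∈ Finset.range k, p i) * ν ^ ((m : ℝ) * (k : ℝ)) *
          Real.log (p k) / Real.log (ν ^ (m : ℝ) * p k) *
          (1 - ν ^ ((m : ℝ) / (j : ℝ)) * p k ^ ((1 : ℝ) / (j : ℝ))) *
          ∑ d ∈ Finset.Ico n₁ j,
            ((d : ℝ) + (j : ℝ) * (k : ℝ) + 1) ^ m *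
              ν ^ ((d : ℝ) * (m : ℝ) / (j : ℝ)) * p k ^ ((d : ℝ) / (j : ℝ)))
      + (ν ^ (((n : ℝ) + (l : ℝ)) * (m : ℝ)) * (∏ i ∈ Finset.range (n + l), p i) *
          Real.log (p (n + l)) *
          (1 - p (n + l) ^ ((1 : ℝ) / (j : ℝ)) * ν ^ ((m : ℝ) / (j : ℝ))) /
          Real.log (ν ^ (m : ℝ) * p (n + l))) *
          ∑ d ∈ Finset.range n₁,
            ((d : ℝ) + (j : ℝ) * ((n : ℝ) + (l : ℝ)) + 1) ^ m *
              ν ^ ((d : ℝ) * (m : ℝ) / (j : ℝ)) *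
              p (n + l) ^ ((d : ℝ) / (j : ℝ)) := by
  obtain ⟨hν0, hν1⟩ := hν
  have hq : ∀ k, l ≤ k → k ≤ l + n → ν ^ (m : ℝ) * p k ≠ 1 := fun k hlk hkn =>
    (rpow_mul_lt_one hν0.le hν1.le m.cast_nonneg (hp k hlk hkn).1.le (hp k hlk hkn).2).ne
  congr 1
  · refine sum_congr rfl fun k hk => ?_
    obtain ⟨hlk, hkn⟩ := mem_Ico.mp hk
    rw [mul_sum]
    refine sum_congr rfl fun d _ => ?_
    rw [integral_rpow_mul_cfm_density_add_div hν0 (hp k hlk (by omega)).1 (hq k hlk (by omega))]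
    ring
  · rw [mul_sum]
    refine sum_congr rfl fun d _ => ?_
    rw [integral_rpow_mul_cfm_density_add_div hν0 (hp (n + l) (by omega) (by omega)).1
      (hq (n + l) (by omega) (by omega)), mul_comm ((n : ℝ) + l)]
    ring

/-- m-th moment of (⌊j·T_x⌋+1)·ν^{T_x} restricted to
{l + n₁/j ≤ T_x < n + l + n₁/j} under the constant force of mortality assumption. -/
theorem moment_mthly_increasing_insurance
    (p : ℕ → ℝ) (ν : ℝ) (hν : ν ∈ Set.Ioo (0 : ℝ) 1)
    (j n m l n₁ : ℕ) (hj : 1 ≤ j) (hn : 1 ≤ n) (hn₁ : n₁ < j)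
    (hp : ∀ k, l ≤ k → k ≤ l + n → 0 < p k ∧ p k < 1) :
    (∑ k ∈ Finset.Ico l (n + l), ∑ d ∈ Finset.Ico n₁ j,
        ((d : ℝ) + (j : ℝ) * (k : ℝ) + 1) ^ m *
          ∫ t in ((k : ℝ) + (d : ℝ) / (j : ℝ))..((k : ℝ) + ((d : ℝ) + 1) / (j : ℝ)),
            ν ^ ((m : ℝ) * t) *
              ((∏ i ∈ Finset.range k, p i) * p k ^ (t - (k : ℝ)) * Real.log (1 / p k)))
      + ∑ d ∈ Finset.range n₁,
          ((d : ℝ) + (j : ℝ) * ((n : ℝ) + (l : ℝ)) + 1) ^ m *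
            ∫ t in (((n : ℝ) + (l : ℝ)) + (d : ℝ) / (j : ℝ))..
                (((n : ℝ) + (l : ℝ)) + ((d : ℝ) + 1) / (j : ℝ)),
              ν ^ ((m : ℝ) * t) *
                ((∏ i ∈ Finset.range (n + l), p i) *
                  p (n + l) ^ (t - ((n : ℝ) + (l : ℝ))) * Real.log (1 / p (n + l)))
    = (∑ k ∈ Finset.Ico l (n + l),
        (∏ i ∈ Finset.range k, p i) * ν ^ ((m : ℝ) * (k : ℝ)) *
          Real.log (p k) / Real.log (ν ^ (m : ℝ) * p k) *
          (1 - ν ^ ((m : ℝ) / (j : ℝ)) * p k ^ ((1 : ℝ) / (j : ℝ))) *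
          ∑ d ∈ Finset.Ico n₁ j,
            ((d : ℝ) + (j : ℝ) * (k : ℝ) + 1) ^ m *
              ν ^ ((d : ℝ) * (m : ℝ) / (j : ℝ)) * p k ^ ((d : ℝ) / (j : ℝ)))
      + (ν ^ (((n : ℝ) + (l : ℝ)) * (m : ℝ)) * (∏ i ∈ Finset.range (n + l), p i) *
          Real.log (p (n + l)) *
          (1 - p (n + l) ^ ((1 : ℝ) / (j : ℝ)) * ν ^ ((m : ℝ) / (j : ℝ))) /
          Real.log (ν ^ (m : ℝ) * p (n + l))) *
          ∑ d ∈ Finset.range n₁,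
            ((d : ℝ) + (j : ℝ) * ((n : ℝ) + (l : ℝ)) + 1) ^ m *
              ν ^ ((d : ℝ) * (m : ℝ) / (j : ℝ)) *
              p (n + l) ^ ((d : ℝ) / (j : ℝ)) :=
  moment_mthly_increasing_insurance_general p ν hν j n m l n₁ hp
end
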